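/- For z ∈ ℂ in the unit disk with fixed branches, the convolution-type expression m∘((L∘S ⊗ Li)∘(id ⊗ P)∘Δ)(t_p) equals ã_p(z) = Σ_{j=0}^{p-1} (-1)^j Li_{p-j}(z) ln^j(z)/j!, where P is the projection killing t_0. -/

import Mathlib

open TensorProduct

/-- The ladder generator `t n`, realized as the divided power `X^n / n!` in `ℂ[X]`. -/
noncomputable def t (n : ℕ) : Polynomial ℂ := (n.factorial : ℂ)⁻¹ • Polynomial.X ^ n

/-- The polylogarithm `Li n z = ∑_{k=1}^∞ z^k / k^n` for `n ≥ 1`. -/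
noncomputable def polyLi (n : ℕ) (z : ℂ) : ℂ := ∑' k : ℕ, z ^ (k + 1) / ((k + 1 : ℕ) : ℂ) ^ n

theorem TensorProduct.lift_mul_compl₂_comp_tmul {R M N A : Type*} [CommSemiring R]
    [AddCommMonoid M] [Module R M] [AddCommMonoid N] [Module R N]
    [NonUnitalNonAssocSemiring A] [Module R A] [SMulCommClass R A A] [IsScalarTower R A A]
    (f : M →ₗ[R] A) (g : N →ₗ[R] A) (x : M) (y : N) :
    lift ((LinearMap.mul R A).compl₂ g ∘ₗ f) (x ⊗ₜ y) = f x * g y :=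
  rfl

theorem ladder_univalent_combination_general (z : ℂ)
    (p : ℕ)
    (Δ : Polynomial ℂ →ₗ[ℂ] TensorProduct ℂ (Polynomial ℂ) (Polynomial ℂ))
    (hΔ : ∀ n : ℕ, Δ (t n) = ∑ j ∈ Finset.range (n + 1), t j ⊗ₜ[ℂ] t (n - j))
    (L : Polynomial ℂ →ₗ[ℂ] ℂ)
    (hL : ∀ n : ℕ, L (t n) = (Complex.log z) ^ n / (n.factorial : ℂ))
    (S : Polynomial ℂ →ₗ[ℂ] Polynomial ℂ)
    (hS : ∀ n : ℕ, S (t n) = ((-1 : ℂ) ^ n) • t n)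
    (LiM : Polynomial ℂ →ₗ[ℂ] ℂ)
    (hLiM : ∀ n : ℕ, 1 ≤ n → LiM (t n) = polyLi n z)
    (P : Polynomial ℂ →ₗ[ℂ] Polynomial ℂ)
    (hP0 : P (t 0) = 0) (hP : ∀ n : ℕ, 1 ≤ n → P (t n) = t n) :
    TensorProduct.lift (((LinearMap.mul ℂ ℂ).compl₂ (LiM ∘ₗ P)) ∘ₗ (L ∘ₗ S)) (Δ (t p)) =
      ∑ j ∈ Finset.range p,
        (-1 : ℂ) ^ j * polyLi (p - j) z * (Complex.log z) ^ j / (j.factorial : ℂ) := by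
  rw [hΔ, map_sum, Finset.sum_range_succ, lift_mul_compl₂_comp_tmul, Nat.sub_self,
    LinearMap.comp_apply LiM, hP0, map_zero, mul_zero, add_zero]
  refine Finset.sum_congr rfl fun j hj => ?_
  have hpj : 1 ≤ p - j := by have := Finset.mem_range.mp hj; omega
  rw [lift_mul_compl₂_comp_tmul, LinearMap.comp_apply, LinearMap.comp_apply, hS, map_smul, hL,
    hP _ hpj, hLiM _ hpj, smul_eq_mul]
  ring

/-- For `z` in the unit disk (fixed branch `Complex.log`), the convolution-type
expression `m ∘ ((L∘S ⊗ Li) ∘ (id ⊗ P) ∘ Δ)(t p)` equals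
`ã_p(z) = ∑_{j=0}^{p-1} (-1)^j Li_{p-j}(z) ln(z)^j / j!`.
Here `Δ(t n) = ∑ t j ⊗ t (n-j)` is the coproduct, `S` the antipode
(`S(t n) = (-1)^n t n`, so `L∘S(t n) = (-ln z)^n/n!`), `L(t n) = ln(z)^n/n!`,
`Li(t n) = Li_n(z)` for `n ≥ 1`, `P` the projection killing `t 0`, and `m` is
multiplication in `ℂ` (implemented via `TensorProduct.lift`). -/
theorem ladder_univalent_combination (z : ℂ) (hz : ‖z‖ < 1) (hz0 : z ≠ 0)
    (p : ℕ) (hp : 1 ≤ p)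
    (Δ : Polynomial ℂ →ₗ[ℂ] TensorProduct ℂ (Polynomial ℂ) (Polynomial ℂ))
    (hΔ : ∀ n : ℕ, Δ (t n) = ∑ j ∈ Finset.range (n + 1), t j ⊗ₜ[ℂ] t (n - j))
    (L : Polynomial ℂ →ₗ[ℂ] ℂ)
    (hL : ∀ n : ℕ, L (t n) = (Complex.log z) ^ n / (n.factorial : ℂ))
    (S : Polynomial ℂ →ₗ[ℂ] Polynomial ℂ)
    (hS : ∀ n : ℕ, S (t n) = ((-1 : ℂ) ^ n) • t n)
    (LiM : Polynomial ℂ →ₗ[ℂ] ℂ)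
    (hLiM : ∀ n : ℕ, 1 ≤ n → LiM (t n) = polyLi n z)
    (P : Polynomial ℂ →ₗ[ℂ] Polynomial ℂ)
    (hP0 : P (t 0) = 0) (hP : ∀ n : ℕ, 1 ≤ n → P (t n) = t n) :
    TensorProduct.lift (((LinearMap.mul ℂ ℂ).compl₂ (LiM ∘ₗ P)) ∘ₗ (L ∘ₗ S)) (Δ (t p)) =
      ∑ j ∈ Finset.range p,
        (-1 : ℂ) ^ j * polyLi (p - j) z * (Complex.log z) ^ j / (j.factorial : ℂ) :=
  ladder_univalent_combination_general z p Δ hΔ L hL S hS LiM hLiM P hP0 hP
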